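/- Let G be a finite simple graph on l vertices and let m : L_G → ℚ be defined by m(π) = (-1)^{l-|π|} μ(0̂, π), where μ is the Möbius function of the bond lattice. Then m satisfies the recurrence: m(0̂) = 1, and for every π ≠ 0̂, m(π) = Σ_{π → π′} w(π, π′) m(π′), where the sum is over elements π′ covered by π and w(π, π′) = (1/d(π)) · e(S′_k, S′_{k+1})/e(S_k) as defined from the split block S_k = S′_k ⊔ S′_{k+1}. -/

import Mathlib

open Finset Polynomial
open scoped Classical

variable {V : Type} [Fintype V] [DecidableEq V]

/-- A bond-lattice element: a partition of the vertex set all of whose blocks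
induce connected subgraphs. -/
def IsBondPartition (G : SimpleGraph V) (π : Finset (Finset V)) : Prop :=
  (∀ v : V, ∃! B, B ∈ π ∧ v ∈ B) ∧
  ∀ B ∈ π, (G.induce (B : Set V)).Connected

noncomputable def bondFinset (G : SimpleGraph V) : Finset (Finset (Finset V)) :=
  Finset.univ.filter (IsBondPartition G)

/-- The partition of the vertex set into singletons. -/
def botPartition (V : Type) [Fintype V] [DecidableEq V] : Finset (Finset V) :=
  Finset.univ.image fun v => ({v} : Finset V)

/-- `Refines π σ` : every block of `π` is contained in some block of `σ`. -/
def Refines (π σ : Finset (Finset V)) : Prop :=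
  ∀ B ∈ π, ∃ C ∈ σ, B ⊆ C

/-- A polynomial is the chromatic polynomial of `G` if it counts proper colorings. -/
def IsChromaticPolynomial (G : SimpleGraph V) (P : Polynomial ℤ) : Prop :=
  ∀ n : ℕ, P.eval (n : ℤ) = Nat.card (G.Coloring (Fin n))

/-- Number of edges of `G` with both endpoints in `S`. -/
noncomputable def eIn (G : SimpleGraph V) (S : Finset V) : ℕ :=
  (Finset.univ.filter fun e : Sym2 V => e ∈ G.edgeSet ∧ ∀ v ∈ e, v ∈ S).card

/-- Number of edges of `G` with one endpoint in `S` and the other in `S'`. -/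
noncomputable def eBetween (G : SimpleGraph V) (S S' : Finset V) : ℕ :=
  (Finset.univ.filter fun e : Sym2 V =>
    e ∈ G.edgeSet ∧ ∃ a ∈ S, ∃ b ∈ S', e = s(a, b)).card

/-- `π` covers `π'` in the bond lattice. -/
def BondCovers (G : SimpleGraph V) (π π' : Finset (Finset V)) : Prop :=
  IsBondPartition G π ∧ IsBondPartition G π' ∧ Refines π' π ∧ π'.card = π.card + 1

/-- Number of non-singleton blocks. -/
def dcount (π : Finset (Finset V)) : ℕ := (π.filter fun B => 1 < B.card).card

/-- The weight of a covering edge `π → π'`: if `π'` splits the block `S` of `π`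
into `S₁ ⊔ S₂`, this is `(1/d(π)) ⬝ e(S₁,S₂)/e(S)`. -/
noncomputable def covWeight (G : SimpleGraph V) (π π' : Finset (Finset V)) : ℚ :=
  (1 / (dcount π : ℚ)) *
    ((∑ A ∈ π' \ π, ∑ B ∈ π' \ π, if A = B then 0 else (eBetween G A B : ℚ)) / 2) /
    (∑ S ∈ π \ π', (eIn G S : ℚ))

/-- The weight of a path: the product of the weights of its edges. -/
noncomputable def pathWeight (G : SimpleGraph V) : List (Finset (Finset V)) → ℚ
  | [] => 1
  | [_] => 1
  | a :: b :: rest => covWeight G a b * pathWeight G (b :: rest)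

/-! For an edge `uv`, merging the parts of `u` and `v` is a closure operator on partitions which
preserves bond partitions, and its fibre over a closed `π` consists of `π` itself and the lower
covers of `π` that separate `u` from `v`.
Weisner's theorem therefore gives `μ π + ∑ μ π' = 0`, summed over these covers. Summing this over
the edges inside a block `S` of `π` gives `e(S) μ π + ∑ c_S(π') μ π' = 0`, where `c_S(π')` is the
number of edges of `S` cut by `π'`: it is `e(S'_k, S'_{k+1})` if `π'` splits `S` and `0`
otherwise. Dividing by `e(S)` and averaging over the `d(π)` non-singleton blocks gives the
recurrence, with a sign change since `|π'| = |π| + 1`. -/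

/-- Weisner's theorem, for a closure operator instead of the join with a fixed atom. -/
theorem ClosureOperator.sum_filter_closure_eq_zero {α R : Type*} [PartialOrder α]
    [AddCommGroup R] (c : ClosureOperator α) {s : Finset α} (hs : ∀ x ∈ s, c x ∈ s)
    (μ : α → R) (hμ : ∀ y ∈ s, c.IsClosed y → ∑ x ∈ s with x ≤ y, μ x = 0) :
    ∀ y ∈ s, c.IsClosed y → ∑ x ∈ s with c x = y, μ x = 0 := by
  intro y
  induction hn : #{x ∈ s | x < y} using Nat.strong_induction_on generalizing y with
  | _ n ih =>
  intro hy hyc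
  have hfiber : ∀ z, c.IsClosed z → z ≤ y →
      {x ∈ s | x ≤ y ∧ c x = z} = {x ∈ s | c x = z} := fun z hz hzy => by
    ext x
    simp only [mem_filter]
    exact ⟨fun h => ⟨h.1, h.2.2⟩, fun h => ⟨h.1, (hz.closure_le_iff.1 h.2.le).trans hzy, h.2⟩⟩
  have hsplit := sum_fiberwise_of_maps_to (s := {x ∈ s | x ≤ y})
    (t := {z ∈ s | c.IsClosed z ∧ z ≤ y}) (g := c) (fun x hx => by
      simp only [mem_filter] at hx ⊢
      exact ⟨hs x hx.1, c.isClosed_closure x, hyc.closure_le_iff.2 hx.2⟩) μ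
  rw [hμ y hy hyc, sum_eq_single_of_mem y (by simp [hy, hyc]) ?_] at hsplit
  · simpa [filter_filter, hfiber y hyc le_rfl] using hsplit
  intro z hz hzy
  simp only [mem_filter] at hz
  rw [filter_filter, hfiber z hz.2.1 hz.2.2]
  refine ih _ ?_ z rfl hz.1 hz.2.1
  rw [← hn]
  refine card_lt_card ⟨fun x hx => ?_, fun h => ?_⟩
  · simp only [mem_filter] at hx ⊢
    exact ⟨hx.1, hx.2.trans_le hz.2.2⟩
  · simpa using h (mem_filter.2 ⟨hz.1, lt_of_le_of_ne hz.2.2 hzy⟩)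

namespace Finpartition

section Basic

variable {α : Type*} [DecidableEq α] {s : Finset α}

def partsEmbedding (s : Finset α) : Finpartition s ↪ Finset (Finset α) :=
  ⟨parts, fun _ _ => Finpartition.ext⟩

@[simp]
lemma partsEmbedding_apply (P : Finpartition s) : partsEmbedding s P = P.parts :=
  rfl

lemma part_bot {a : α} (ha : a ∈ s) : (⊥ : Finpartition s).part a = {a} :=
  part_eq_of_mem _ (mem_bot_iff.2 ⟨a, ha, rfl⟩) (mem_singleton_self a)

def Separates (Q : Finpartition s) : Sym2 α → Prop :=
  Sym2.lift ⟨fun a b => Q.part a ≠ Q.part b, fun _ _ => propext ne_comm⟩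

lemma separates_mk {Q : Finpartition s} {a b : α} :
    Q.Separates s(a, b) ↔ Q.part a ≠ Q.part b :=
  Iff.rfl

end Basic

section Merge

variable {α : Type*} [Fintype α] [DecidableEq α] {P Q : Finpartition (univ : Finset α)}
  {u v : α}

lemma existsUnique_mem_merge (P : Finpartition (univ : Finset α)) (u v a : α) :
    ∃! t, t ∈ insert (P.part u ∪ P.part v) ((P.parts.erase (P.part u)).erase (P.part v)) ∧
      a ∈ t := by
  have hmem (w : α) : a ∈ P.part w ↔ P.part a = P.part w :=
    (P.part_eq_iff_mem (P.part_mem.2 (mem_univ w))).symm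
  simp only [mem_insert, mem_erase]
  by_cases ha : a ∈ P.part u ∪ P.part v
  · refine ⟨_, ⟨Or.inl rfl, ha⟩, ?_⟩
    rintro t ⟨rfl | ⟨htv, htu, ht⟩, hat⟩
    · rfl
    · rw [mem_union, hmem, hmem, P.part_eq_of_mem ht hat] at ha
      exact ha.elim (absurd · htu) (absurd · htv)
  · have hau : P.part a ≠ P.part u := fun h => ha (mem_union_left _ ((hmem u).2 h))
    have hav : P.part a ≠ P.part v := fun h => ha (mem_union_right _ ((hmem v).2 h))
    refine ⟨P.part a, ⟨Or.inr ⟨hav, hau, P.part_mem.2 (mem_univ a)⟩,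
      P.mem_part (mem_univ a)⟩, ?_⟩
    rintro t ⟨rfl | ⟨-, -, ht⟩, hat⟩
    · exact absurd hat ha
    · exact (P.part_eq_of_mem ht hat).symm

def merge (P : Finpartition (univ : Finset α)) (u v : α) : Finpartition (univ : Finset α) :=
  ofExistsUnique (insert (P.part u ∪ P.part v) ((P.parts.erase (P.part u)).erase (P.part v)))
    (fun _ _ => subset_univ _) (fun a _ => P.existsUnique_mem_merge u v a) (by
      simp only [mem_insert, mem_erase, not_or]
      refine ⟨fun h => ?_, fun h => P.empty_notMem_parts h.2.2⟩
      exact notMem_empty u (h ▸ mem_union_left _ (P.mem_part (mem_univ u))))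

lemma mem_merge_parts {t : Finset α} : t ∈ (P.merge u v).parts ↔
    t = P.part u ∪ P.part v ∨ (t ∈ P.parts ∧ t ≠ P.part u ∧ t ≠ P.part v) := by
  simp only [merge, ofExistsUnique_parts, mem_insert, mem_erase]
  tauto

lemma part_merge_left : (P.merge u v).part u = P.part u ∪ P.part v :=
  part_eq_of_mem _ (mem_merge_parts.2 (Or.inl rfl)) (mem_union_left _ (P.mem_part (mem_univ u)))

lemma part_merge_right : (P.merge u v).part v = P.part u ∪ P.part v :=
  part_eq_of_mem _ (mem_merge_parts.2 (Or.inl rfl)) (mem_union_right _ (P.mem_part (mem_univ v)))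

lemma le_merge (P : Finpartition (univ : Finset α)) (u v : α) : P ≤ P.merge u v := by
  intro t ht
  by_cases htu : t = P.part u
  · exact ⟨_, mem_merge_parts.2 (Or.inl rfl), htu ▸ subset_union_left⟩
  by_cases htv : t = P.part v
  · exact ⟨_, mem_merge_parts.2 (Or.inl rfl), htv ▸ subset_union_right⟩
  exact ⟨t, mem_merge_parts.2 (Or.inr ⟨ht, htu, htv⟩), le_rfl⟩

lemma part_subset_part_of_le (h : P ≤ Q) (a : α) : P.part a ⊆ Q.part a := by
  obtain ⟨t, ht, hsub⟩ := h (P.part_mem.2 (mem_univ a))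
  rw [Q.part_eq_of_mem ht (hsub (P.mem_part (mem_univ a)))]
  exact hsub

lemma merge_le (h : P ≤ Q) (hQ : Q.part u = Q.part v) : P.merge u v ≤ Q := by
  intro t ht
  rcases mem_merge_parts.1 ht with rfl | ⟨ht, -, -⟩
  · exact ⟨Q.part u, Q.part_mem.2 (mem_univ u),
      union_subset (part_subset_part_of_le h u) (hQ ▸ part_subset_part_of_le h v)⟩
  · exact h ht

def mergeClosure (u v : α) : ClosureOperator (Finpartition (univ : Finset α)) :=
  .ofPred (merge · u v) (fun Q => Q.part u = Q.part v) (le_merge · u v)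
    (fun _ => part_merge_left.trans part_merge_right.symm) (fun _ _ => merge_le)

lemma merge_eq_self (h : P.part u = P.part v) : P.merge u v = P :=
  (mergeClosure u v).isClosed_iff.1 h

lemma union_part_notMem_parts (h : P.part u ≠ P.part v) : P.part u ∪ P.part v ∉ P.parts := by
  intro hmem
  exact h ((P.part_eq_of_mem hmem (mem_union_left _ (P.mem_part (mem_univ u)))).trans
    (P.part_eq_of_mem hmem (mem_union_right _ (P.mem_part (mem_univ v)))).symm)

lemma card_merge_parts_add_one (h : P.part u ≠ P.part v) :
    #(P.merge u v).parts + 1 = #P.parts := by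
  have hu := P.part_mem.2 (mem_univ u)
  have hv := P.part_mem.2 (mem_univ v)
  have hnot : P.part u ∪ P.part v ∉ (P.parts.erase (P.part u)).erase (P.part v) :=
    fun hmem => union_part_notMem_parts h (mem_of_mem_erase (mem_of_mem_erase hmem))
  rw [merge, ofExistsUnique_parts, card_insert_of_notMem hnot,
    card_erase_of_mem (mem_erase.2 ⟨h.symm, hv⟩), card_erase_of_mem hu]
  have := one_lt_card.2 ⟨_, hu, _, hv, h⟩
  omega

lemma merge_parts_sdiff (h : P.part u ≠ P.part v) :
    (P.merge u v).parts \ P.parts = {P.part u ∪ P.part v} := by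
  ext t
  rw [mem_sdiff, mem_merge_parts, mem_singleton]
  constructor
  · rintro ⟨rfl | ⟨ht, -⟩, htP⟩
    · rfl
    · exact absurd ht htP
  · rintro rfl
    exact ⟨Or.inl rfl, union_part_notMem_parts h⟩

lemma parts_sdiff_merge (h : P.part u ≠ P.part v) :
    P.parts \ (P.merge u v).parts = {P.part u, P.part v} := by
  ext t
  rw [mem_sdiff, mem_merge_parts, mem_insert, mem_singleton]
  constructor
  · rintro ⟨ht, hne⟩
    tauto
  · rintro (rfl | rfl) <;> refine ⟨P.part_mem.2 (mem_univ _), ?_⟩ <;>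
      rintro (he | ⟨-, hu, hv⟩)
    · exact union_part_notMem_parts h (he ▸ P.part_mem.2 (mem_univ u))
    · exact hu rfl
    · exact union_part_notMem_parts h (he ▸ P.part_mem.2 (mem_univ v))
    · exact hv rfl

lemma exists_part_ne_part_of_not_le (h : ¬Q ≤ P) :
    ∃ u v, P.part u ≠ P.part v ∧ Q.part u = Q.part v := by
  simp only [LE.le, not_forall, not_exists, not_and] at h
  obtain ⟨S, hS, hSP⟩ := h
  obtain ⟨u, hu⟩ := Q.nonempty_of_mem_parts hS
  obtain ⟨v, hv, hvu⟩ := hSP _ (P.part_mem.2 (mem_univ u))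
  refine ⟨u, v, fun he => hvu (he ▸ P.mem_part (mem_univ v)), ?_⟩
  rw [Q.part_eq_of_mem hS hu, Q.part_eq_of_mem hS hv]

lemma eq_of_le_of_card_parts_eq (h : P ≤ Q) (hc : #P.parts = #Q.parts) : P = Q := by
  by_contra hne
  obtain ⟨u, v, hP, hQ⟩ := exists_part_ne_part_of_not_le fun h' => hne (le_antisymm h h')
  have := card_mono (merge_le h hQ)
  have := card_merge_parts_add_one hP
  omega

lemma exists_merge_eq_of_le_of_card_parts_eq_add_one (h : P ≤ Q)
    (hc : #P.parts = #Q.parts + 1) : ∃ u v, P.part u ≠ P.part v ∧ P.merge u v = Q := by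
  obtain ⟨u, v, hP, hQ⟩ := exists_part_ne_part_of_not_le fun h' => by
    rw [le_antisymm h h'] at hc
    omega
  refine ⟨u, v, hP, eq_of_le_of_card_parts_eq (merge_le h hQ) ?_⟩
  have := card_merge_parts_add_one hP
  omega

lemma merge_eq_iff (hP : P.part u = P.part v) : Q.merge u v = P ↔
    Q = P ∨ (Q ≤ P ∧ #Q.parts = #P.parts + 1 ∧ Q.part u ≠ Q.part v) := by
  constructor
  · rintro rfl
    by_cases hQ : Q.part u = Q.part v
    · exact Or.inl (merge_eq_self hQ).symm
    · exact Or.inr ⟨le_merge Q u v, (card_merge_parts_add_one hQ).symm, hQ⟩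
  · rintro (rfl | ⟨hle, hc, hQ⟩)
    · exact merge_eq_self hP
    · refine eq_of_le_of_card_parts_eq (merge_le hle hP) ?_
      have := card_merge_parts_add_one hQ
      omega

lemma exists_one_lt_card_of_ne_bot (hP : P ≠ ⊥) : ∃ S ∈ P.parts, 1 < #S := by
  by_contra! h
  refine hP (eq_of_le_of_card_parts_eq bot_le ?_).symm
  have hone : ∀ S ∈ P.parts, #S = 1 := fun S hS =>
    le_antisymm (h S hS) (card_pos.2 (P.nonempty_of_mem_parts hS))
  rw [card_bot, ← P.sum_card_parts, sum_congr rfl hone, card_eq_sum_ones]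

end Merge

end Finpartition

open Finpartition

section BondLattice

variable {G : SimpleGraph V} {P Q : Finpartition (univ : Finset V)} {u v : V} {S : Finset V}

noncomputable def bondPartitions (G : SimpleGraph V) : Finset (Finpartition (univ : Finset V)) :=
  {P | ∀ t ∈ P.parts, (G.induce (t : Set V)).Connected}

noncomputable def bondLowerCovers (G : SimpleGraph V) (P : Finpartition (univ : Finset V)) :
    Finset (Finpartition (univ : Finset V)) :=
  {Q ∈ bondPartitions G | Q ≤ P ∧ #Q.parts = #P.parts + 1}

lemma isBondPartition_iff {π : Finset (Finset V)} :
    IsBondPartition G π ↔ ∃ P ∈ bondPartitions G, P.parts = π := by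
  constructor
  · rintro ⟨hpart, hconn⟩
    have hempty : ∅ ∉ π := fun h => by simpa using (hconn ∅ h).nonempty
    exact ⟨ofExistsUnique π (fun _ _ => subset_univ _) (fun a _ => hpart a) hempty,
      mem_filter.2 ⟨mem_univ _, hconn⟩, rfl⟩
  · rintro ⟨P, hP, rfl⟩
    exact ⟨fun a => P.existsUnique_mem (mem_univ a), (mem_filter.1 hP).2⟩

lemma bondFinset_eq_map : bondFinset G = (bondPartitions G).map (partsEmbedding univ) := by
  ext π
  simp [bondFinset, isBondPartition_iff]

lemma sum_bondFinset_filter_refines {M : Type*} [AddCommMonoid M] (f : Finset (Finset V) → M) :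
    ∑ σ ∈ (bondFinset G).filter (fun σ => Refines σ P.parts), f σ =
      ∑ Q ∈ bondPartitions G with Q ≤ P, f Q.parts := by
  rw [bondFinset_eq_map, filter_map, sum_map]
  rfl

lemma bondFinset_filter_bondCovers (hP : P ∈ bondPartitions G) :
    (bondFinset G).filter (fun π' => BondCovers G P.parts π') =
      (bondLowerCovers G P).map (partsEmbedding univ) := by
  rw [bondFinset_eq_map, filter_map]
  congr 1
  refine filter_congr fun Q hQ => ?_
  simp only [Function.comp_apply, partsEmbedding_apply, BondCovers, isBondPartition_iff]
  exact ⟨fun h => ⟨h.2.2.1, h.2.2.2⟩, fun h => ⟨⟨P, hP, rfl⟩, ⟨Q, hQ, rfl⟩, h⟩⟩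

lemma botPartition_eq : botPartition V = (⊥ : Finpartition (univ : Finset V)).parts := by
  simp [botPartition, map_eq_image]

lemma card_botPartition : (botPartition V).card = Fintype.card V := by
  rw [botPartition_eq, card_bot, card_univ]

lemma merge_mem_bondPartitions (hP : P ∈ bondPartitions G) (huv : G.Adj u v) :
    P.merge u v ∈ bondPartitions G := by
  have hconn := (mem_filter.1 hP).2
  refine mem_filter.2 ⟨mem_univ _, fun t ht => ?_⟩
  rcases mem_merge_parts.1 ht with rfl | ⟨ht, -, -⟩
  · rw [coe_union]
    exact SimpleGraph.connected_induce_union (hconn _ (P.part_mem.2 (mem_univ u))).preconnected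
      (hconn _ (P.part_mem.2 (mem_univ v))).preconnected (P.mem_part (mem_univ u))
      (P.mem_part (mem_univ v)) huv
  · exact hconn t ht

theorem add_sum_bondLowerCovers_filter_part_ne {R : Type*} [AddCommGroup R]
    (μ : Finpartition (univ : Finset V) → R)
    (hμ : ∀ P ∈ bondPartitions G, P ≠ ⊥ → ∑ Q ∈ bondPartitions G with Q ≤ P, μ Q = 0)
    (hP : P ∈ bondPartitions G) (huv : G.Adj u v) (hPuv : P.part u = P.part v) :
    μ P + ∑ Q ∈ bondLowerCovers G P with Q.part u ≠ Q.part v, μ Q = 0 := by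
  have hW := (mergeClosure u v).sum_filter_closure_eq_zero
    (fun _ hx => merge_mem_bondPartitions hx huv) μ
    (fun y hy hyc => hμ y hy fun hbot => by
      have hyuv : y.part u = y.part v := hyc
      simp [hbot, part_bot, huv.ne] at hyuv) P hP hPuv
  have hfiber : {x ∈ bondPartitions G | mergeClosure u v x = P} =
      insert P {Q ∈ bondLowerCovers G P | Q.part u ≠ Q.part v} := by
    ext Q
    simp only [mem_filter, mem_insert, bondLowerCovers]
    change _ ∧ Q.merge u v = P ↔ _
    rw [merge_eq_iff hPuv]
    constructor
    · rintro ⟨hQ, rfl | h⟩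
      · exact Or.inl rfl
      · exact Or.inr ⟨⟨hQ, h.1, h.2.1⟩, h.2.2⟩
    · rintro (rfl | ⟨⟨hQ, h₁, h₂⟩, h₃⟩)
      · exact ⟨hP, Or.inl rfl⟩
      · exact ⟨hQ, Or.inr ⟨h₁, h₂, h₃⟩⟩
  rw [← sum_insert (f := μ) (by simp [bondLowerCovers]), ← hfiber]
  convert hW

noncomputable def edgesIn (G : SimpleGraph V) (S : Finset V) : Finset (Sym2 V) :=
  {e | e ∈ G.edgeSet ∧ ∀ v ∈ e, v ∈ S}

theorem eIn_smul_add_sum_card_separates {R : Type*} [AddCommGroup R]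
    (μ : Finpartition (univ : Finset V) → R)
    (hμ : ∀ P ∈ bondPartitions G, P ≠ ⊥ → ∑ Q ∈ bondPartitions G with Q ≤ P, μ Q = 0)
    (hP : P ∈ bondPartitions G) (hS : S ∈ P.parts) :
    eIn G S • μ P + ∑ Q ∈ bondLowerCovers G P, #{e ∈ edgesIn G S | Q.Separates e} • μ Q = 0 := by
  have hedge : ∀ e ∈ edgesIn G S,
      μ P + ∑ Q ∈ bondLowerCovers G P with Q.Separates e, μ Q = 0 := by
    intro e he
    induction e using Sym2.ind with | _ u v =>
    simp only [edgesIn, mem_filter, mem_univ, true_and, Sym2.mem_iff, forall_eq_or_imp,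
      forall_eq] at he
    rw [filter_congr fun Q _ => separates_mk]
    exact add_sum_bondLowerCovers_filter_part_ne μ hμ hP he.1
      ((P.part_eq_of_mem hS he.2.1).trans (P.part_eq_of_mem hS he.2.2).symm)
  have hswap : ∑ e ∈ edgesIn G S, ∑ Q ∈ bondLowerCovers G P with Q.Separates e, μ Q =
      ∑ Q ∈ bondLowerCovers G P, ∑ e ∈ edgesIn G S with Q.Separates e, μ Q :=
    sum_comm' fun e Q => by simp only [mem_filter]; tauto
  rw [← sum_eq_zero hedge, sum_add_distrib, sum_const, hswap]
  simp only [sum_const]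
  rfl

end BondLattice

section Weights

variable {G : SimpleGraph V} {P Q : Finpartition (univ : Finset V)} {u v : V} {S A B : Finset V}

lemma eIn_pos_of_connected (hS : (G.induce (S : Set V)).Connected) (h : 1 < #S) :
    0 < eIn G S := by
  have : Nontrivial (S : Set V) := (one_lt_card_iff_nontrivial.1 h).coe_sort
  obtain ⟨x⟩ := hS.nonempty
  obtain ⟨y, hxy⟩ := hS.preconnected.exists_adj_of_nontrivial x
  refine card_pos.2 ⟨s(x.1, y.1), mem_filter.2 ⟨mem_univ _, hxy, fun w hw => ?_⟩⟩
  rcases Sym2.mem_iff.1 hw with rfl | rfl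
  exacts [x.2, y.2]

lemma eBetween_comm : eBetween G A B = eBetween G B A := by
  rw [eBetween, eBetween]
  congr 1
  ext e
  simp only [mem_filter, mem_univ, true_and]
  constructor <;> rintro ⟨he, a, ha, b, hb, rfl⟩ <;> exact ⟨he, b, hb, a, ha, Sym2.eq_swap⟩

lemma card_separates_eq_zero (hS : S ∈ Q.parts) : #{e ∈ edgesIn G S | Q.Separates e} = 0 := by
  rw [card_eq_zero, filter_eq_empty_iff]
  intro e he
  induction e using Sym2.ind with | _ a b =>
  simp only [edgesIn, mem_filter, mem_univ, true_and, Sym2.mem_iff, forall_eq_or_imp,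
    forall_eq] at he
  rw [separates_mk, not_not, Q.part_eq_of_mem hS he.2.1, Q.part_eq_of_mem hS he.2.2]

lemma card_separates_union (hA : A ∈ Q.parts) (hB : B ∈ Q.parts) (hAB : A ≠ B) :
    #{e ∈ edgesIn G (A ∪ B) | Q.Separates e} = eBetween G A B := by
  rw [eBetween]
  congr 1
  ext e
  induction e using Sym2.ind with | _ x y =>
  simp only [edgesIn, mem_filter, mem_univ, true_and, Sym2.mem_iff, forall_eq_or_imp,
    forall_eq, mem_union, separates_mk, Sym2.eq_iff]
  have hA' {w : V} : w ∈ A → Q.part w = A := Q.part_eq_of_mem hA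
  have hB' {w : V} : w ∈ B → Q.part w = B := Q.part_eq_of_mem hB
  constructor
  · rintro ⟨⟨hxy, hx | hx, hy | hy⟩, hne⟩
    · exact absurd ((hA' hx).trans (hA' hy).symm) hne
    · exact ⟨hxy, x, hx, y, hy, Or.inl ⟨rfl, rfl⟩⟩
    · exact ⟨hxy, y, hy, x, hx, Or.inr ⟨rfl, rfl⟩⟩
    · exact absurd ((hB' hx).trans (hB' hy).symm) hne
  · rintro ⟨hxy, a, ha, b, hb, ⟨rfl, rfl⟩ | ⟨rfl, rfl⟩⟩
    · exact ⟨⟨hxy, Or.inl ha, Or.inr hb⟩, by rw [hA' ha, hB' hb]; exact hAB⟩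
    · exact ⟨⟨hxy, Or.inr hb, Or.inl ha⟩, by rw [hB' hb, hA' ha]; exact hAB.symm⟩

lemma covWeight_merge (h : Q.part u ≠ Q.part v) :
    covWeight G (Q.merge u v).parts Q.parts = 1 / dcount (Q.merge u v).parts *
      eBetween G (Q.part u) (Q.part v) / eIn G (Q.part u ∪ Q.part v) := by
  rw [covWeight, parts_sdiff_merge h, merge_parts_sdiff h, sum_singleton, sum_pair h, sum_pair h,
    sum_pair h, if_pos rfl, if_pos rfl, if_neg h, if_neg h.symm, eBetween_comm (A := Q.part v)]
  ring

lemma covWeight_eq_sum_card_separates_div (hQ : Q ∈ bondLowerCovers G P) :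
    covWeight G P.parts Q.parts = 1 / dcount P.parts *
      ∑ S ∈ P.parts with 1 < #S, (#{e ∈ edgesIn G S | Q.Separates e} : ℚ) / eIn G S := by
  obtain ⟨-, hle, hcard⟩ := mem_filter.1 hQ
  obtain ⟨u, v, huv, rfl⟩ := exists_merge_eq_of_le_of_card_parts_eq_add_one hle hcard
  have hu := Q.part_mem.2 (mem_univ u)
  have hv := Q.part_mem.2 (mem_univ v)
  have hsplit : Q.part u ∪ Q.part v ∈ {S ∈ (Q.merge u v).parts | 1 < #S} := by
    refine mem_filter.2 ⟨mem_merge_parts.2 (Or.inl rfl), one_lt_card.2 ⟨u, ?_, v, ?_, ?_⟩⟩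
    · exact mem_union_left _ (Q.mem_part (mem_univ u))
    · exact mem_union_right _ (Q.mem_part (mem_univ v))
    · rintro rfl
      exact huv rfl
  rw [covWeight_merge huv, sum_eq_single_of_mem _ hsplit, card_separates_union hu hv huv]
  · ring
  intro S hS hne
  rcases mem_merge_parts.1 (mem_filter.1 hS).1 with rfl | ⟨hSQ, -, -⟩
  · exact absurd rfl hne
  · rw [card_separates_eq_zero hSQ, Nat.cast_zero, zero_div]

end Weights

theorem sum_bondLowerCovers_covWeight_mul {G : SimpleGraph V}
    {P : Finpartition (univ : Finset V)} (μ : Finpartition (univ : Finset V) → ℚ)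
    (hμ : ∀ P ∈ bondPartitions G, P ≠ ⊥ → ∑ Q ∈ bondPartitions G with Q ≤ P, μ Q = 0)
    (hP : P ∈ bondPartitions G) (hbot : P ≠ ⊥) :
    ∑ Q ∈ bondLowerCovers G P, covWeight G P.parts Q.parts * μ Q = -μ P := by
  set T := {S ∈ P.parts | 1 < #S}
  have hd : (dcount P.parts : ℚ) ≠ 0 := by
    obtain ⟨S, hS, hS1⟩ := exists_one_lt_card_of_ne_bot hbot
    exact Nat.cast_ne_zero.2 (card_ne_zero_of_mem (mem_filter.2 ⟨hS, hS1⟩))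
  have he : ∀ S ∈ T, (eIn G S : ℚ) ≠ 0 := fun S hS => by
    obtain ⟨hS, hS1⟩ := mem_filter.1 hS
    exact Nat.cast_ne_zero.2 (eIn_pos_of_connected ((mem_filter.1 hP).2 S hS) hS1).ne'
  have hblock : ∀ S ∈ T, ∑ Q ∈ bondLowerCovers G P,
      (#{e ∈ edgesIn G S | Q.Separates e} : ℚ) * μ Q = -(eIn G S * μ P) := fun S hS => by
    have := eIn_smul_add_sum_card_separates μ hμ hP (mem_filter.1 hS).1
    simp only [nsmul_eq_mul] at this
    linear_combination this
  calc ∑ Q ∈ bondLowerCovers G P, covWeight G P.parts Q.parts * μ Q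
      = ∑ S ∈ T, 1 / dcount P.parts * (1 / eIn G S) *
          ∑ Q ∈ bondLowerCovers G P, (#{e ∈ edgesIn G S | Q.Separates e} : ℚ) * μ Q := by
        simp only [mul_sum]
        rw [sum_comm]
        refine sum_congr rfl fun Q hQ => ?_
        rw [covWeight_eq_sum_card_separates_div hQ, mul_sum, sum_mul]
        exact sum_congr rfl fun S _ => by ring
    _ = ∑ S ∈ T, -μ P / dcount P.parts := sum_congr rfl fun S hS => by
        rw [hblock S hS]
        field_simp [he S hS]
    _ = -μ P := by
        rw [sum_const, nsmul_eq_mul, show #T = dcount P.parts from rfl]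
        field_simp

lemma neg_one_pow_sub_card_parts {G : SimpleGraph V} {P Q : Finpartition (univ : Finset V)}
    (hQ : Q ∈ bondLowerCovers G P) :
    (-1 : ℚ) ^ (Fintype.card V - #Q.parts) = -(-1) ^ (Fintype.card V - #P.parts) := by
  have hc := (mem_filter.1 hQ).2.2
  have hle := Q.card_parts_le_card
  rw [card_univ] at hle
  rw [show Fintype.card V - #P.parts = Fintype.card V - #Q.parts + 1 by omega, pow_succ]
  ring

/-- Peterson-type recurrence: `m(π) = (-1)^{l-|π|} μ(0̂,π)` satisfies `m(0̂)=1` and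
`m(π) = ∑_{π → π'} w(π,π') m(π')` for `π ≠ 0̂`. -/
theorem mobius_peterson_recurrence (G : SimpleGraph V)
    (mu : Finset (Finset V) → ℤ)
    (hmu0 : mu (botPartition V) = 1)
    (hmu : ∀ π ∈ bondFinset G, π ≠ botPartition V →
      ∑ σ ∈ (bondFinset G).filter (fun σ => Refines σ π), mu σ = 0) :
    ((-1 : ℚ) ^ (Fintype.card V - (botPartition V).card) * mu (botPartition V) = 1) ∧
    ∀ π ∈ bondFinset G, π ≠ botPartition V →
      ((-1 : ℚ) ^ (Fintype.card V - π.card) * mu π) =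
        ∑ π' ∈ (bondFinset G).filter (fun π' => BondCovers G π π'),
          covWeight G π π' * ((-1 : ℚ) ^ (Fintype.card V - π'.card) * mu π') := by
  have hbot {P : Finpartition (univ : Finset V)} : P.parts ≠ botPartition V ↔ P ≠ ⊥ := by
    rw [botPartition_eq, Ne, Ne, Finpartition.ext_iff]
  refine ⟨by simp [card_botPartition, hmu0], fun π hπ hne => ?_⟩
  have hμ : ∀ P ∈ bondPartitions G, P ≠ ⊥ →
      ∑ Q ∈ bondPartitions G with Q ≤ P, (mu Q.parts : ℚ) = 0 := fun P hP hP' => by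
    have := hmu P.parts (by rw [bondFinset_eq_map]; exact mem_map_of_mem _ hP) (hbot.2 hP')
    rw [sum_bondFinset_filter_refines] at this
    exact_mod_cast this
  obtain ⟨P, hP, rfl⟩ := isBondPartition_iff.1 (mem_filter.1 hπ).2
  rw [bondFinset_filter_bondCovers hP, sum_map, ← neg_neg (mu P.parts : ℚ),
    ← sum_bondLowerCovers_covWeight_mul _ hμ hP (hbot.1 hne), mul_neg, ← neg_mul, mul_sum]
  exact sum_congr rfl fun Q hQ => by
    rw [partsEmbedding_apply, neg_one_pow_sub_card_parts hQ]
    ring
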